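/- arXiv:1501.04302 — 3 statements merged into one kernel-verified Lean document; each statement's English description precedes it below -/
import Mathlib

section
/- Let S be a commutative semigroup, H a subsemigroup with H = ⋂_{i∈I} Sep(H_i) for some family (H_i)_{i∈I}. Then the quotient S/P(H;H_i,I) is a monoid, with identity the class of any element of H. -/
def separator {S : Type*} [Mul S] (A : Set S) : Set S :=
  {x | (∀ a ∈ A, x * a ∈ A) ∧ (∀ a ∈ A, a * x ∈ A) ∧
       (∀ a ∉ A, x * a ∉ A) ∧ (∀ a ∉ A, a * x ∉ A)}

/- An element of `⋂ i, separator (Hi i)` acts trivially on the quotient: multiplying by it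
never changes membership in any `Hi i`, and by commutativity `x * (a * s) * y = a * (x * s * y)`,
so `a * s` and `s` are identified by the syntactic congruence of the family `Hi`. -/

theorem mul_mem_iff_of_mem_separator {S : Type*} [Mul S] {A : Set S} {a : S}
    (ha : a ∈ separator A) (t : S) : a * t ∈ A ↔ t ∈ A :=
  ⟨fun h => not_not.mp fun ht => ha.2.2.1 t ht h, ha.1 t⟩

theorem con_mul_left_of_mem_iInter_separator {S : Type*} [CommSemigroup S] {I : Type*}
    {Hi : I → Set S} {c : Con S}
    (hc : ∀ a b : S, c a b ↔ ∀ i : I, ∀ x y : S, (x * a * y ∈ Hi i ↔ x * b * y ∈ Hi i))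
    {a : S} (ha : a ∈ ⋂ i, separator (Hi i)) (s : S) : c (a * s) s := by
  refine (hc _ _).mpr fun i x y => ?_
  have hshift : x * (a * s) * y = a * (x * s * y) := by ac_rfl
  rw [hshift]
  exact mul_mem_iff_of_mem_separator (Set.mem_iInter.mp ha i) _

theorem quotient_is_monoid_general {S : Type*} [CommSemigroup S] {I : Type*} (H : Set S) (Hi : I → Set S)
    (hsep : H = ⋂ i : I, separator (Hi i))
    (c : Con S)
    (hc : ∀ a b : S, c a b ↔ ∀ i : I, ∀ x y : S, (x * a * y ∈ Hi i ↔ x * b * y ∈ Hi i)) :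
    ∀ a ∈ H, ∀ x : c.Quotient, (a : c.Quotient) * x = x ∧ x * (a : c.Quotient) = x := by
  intro a ha x
  subst hsep
  have hleft : (a : c.Quotient) * x = x := by
    induction x using Con.induction_on with
    | H s => exact c.eq.mpr (con_mul_left_of_mem_iInter_separator hc ha s)
  exact ⟨hleft, mul_comm x (a : c.Quotient) ▸ hleft⟩

theorem quotient_is_monoid {S : Type*} [CommSemigroup S] {I : Type*} (H : Set S) (Hi : I → Set S)
    (hH : H.Nonempty) (hmul : ∀ a ∈ H, ∀ b ∈ H, a * b ∈ H)
    (hsep : H = ⋂ i : I, separator (Hi i))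
    (c : Con S)
    (hc : ∀ a b : S, c a b ↔ ∀ i : I, ∀ x y : S, (x * a * y ∈ Hi i ↔ x * b * y ∈ Hi i)) :
    ∀ a ∈ H, ∀ x : c.Quotient, (a : c.Quotient) * x = x ∧ x * (a : c.Quotient) = x :=
  quotient_is_monoid_general H Hi hsep c hc
end

section
/- Let S be a commutative semigroup and p a monoid congruence on S (i.e., S/p is a monoid). Let H be the congruence class of p that is the identity element of S/p, and let {S_k : k ∈ K} be the set of all congruence classes of p. Then H = ⋂_{k∈K} Sep(S_k). -/
theorem mem_separator_iff {S : Type*} [Mul S] {A : Set S} {x : S} :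
    x ∈ separator A ↔ ∀ a, (x * a ∈ A ↔ a ∈ A) ∧ (a * x ∈ A ↔ a ∈ A) := by
  simp only [separator, Set.mem_ofPred_eq]
  constructor
  · rintro ⟨hl, hr, hl', hr'⟩ a
    exact ⟨⟨not_imp_not.mp (hl' a), hl a⟩, ⟨not_imp_not.mp (hr' a), hr a⟩⟩
  · intro hx
    exact ⟨fun a => (hx a).1.2, fun a => (hx a).2.2,
      fun a => mt (hx a).1.1, fun a => mt (hx a).2.1⟩

theorem Con.mem_separator_setOf {S : Type*} [Mul S] (p : Con S) {x : S}
    (hl : ∀ a, p (x * a) a) (hr : ∀ a, p (a * x) a) (s : S) :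
    x ∈ separator {y | p y s} := by
  have hclass : ∀ {b a : S}, p b a → (p b s ↔ p a s) := fun hba =>
    ⟨p.trans (p.symm hba), p.trans hba⟩
  exact mem_separator_iff.mpr fun a => ⟨hclass (hl a), hclass (hr a)⟩

theorem identity_class_eq_inter_sep {S : Type*} [CommSemigroup S] (p : Con S) (h : S)
    (hid : ∀ u : S, p (u * h) u ∧ p (h * u) u) :
    {x : S | p x h} = ⋂ s : S, separator {x : S | p x s} := by
  ext x
  simp only [Set.mem_iInter]
  constructor
  · intro hx
    exact p.mem_separator_setOf (fun a => p.trans (p.mul hx (p.refl a)) (hid a).2)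
      (fun a => p.trans (p.mul (p.refl a) hx) (hid a).1)
  · intro hx
    have hxh : p (x * h) h := ((mem_separator_iff.mp (hx h)) h).1.mpr (p.refl h)
    exact p.trans (p.symm (hid x).1) hxh
end

section
/- Let S be a commutative semigroup and A ⊆ S with ∅ ⊊ A ⊊ S and Sep(A) ≠ ∅. Then P_A = {(a,b) : for all x,y ∈ S, xay ∈ A ↔ xby ∈ A} is a non-universal monoid congruence on S, and Sep(A) is contained in the identity class of S/P_A. -/
/-! P_A is the syntactic congruence of A. Multiplying by a separator never changes membership in A,
so in the commutative case `u * s` and `u` lie in the same contexts; and for `a ∈ A`, `b ∉ A`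
the context `s * _ * s` separates `a` from `b`, so the congruence is not universal. -/

section Semigroup

variable {S : Type*} [Semigroup S] (A : Set S)

def syntacticCon : Con S where
  r a b := ∀ x y : S, x * a * y ∈ A ↔ x * b * y ∈ A
  iseqv := ⟨fun _ _ _ => Iff.rfl, fun h x y => (h x y).symm,
    fun h₁ h₂ x y => (h₁ x y).trans (h₂ x y)⟩
  mul' {w x y z} h₁ h₂ p q := by
    calc p * (w * y) * q ∈ A ↔ p * w * (y * q) ∈ A := by simp only [mul_assoc]
      _ ↔ p * x * (y * q) ∈ A := h₁ p (y * q)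
      _ ↔ p * x * y * q ∈ A := by simp only [mul_assoc]
      _ ↔ p * x * z * q ∈ A := h₂ (p * x) q
      _ ↔ p * (x * z) * q ∈ A := by simp only [mul_assoc]

theorem syntacticCon_iff {a b : S} :
    syntacticCon A a b ↔ ∀ x y : S, x * a * y ∈ A ↔ x * b * y ∈ A :=
  Iff.rfl

variable {A}

theorem mul_mem_iff_of_mem_separator_s18 {s : S} (hs : s ∈ separator A) (z : S) :
    z * s ∈ A ↔ z ∈ A :=
  ⟨fun h => by_contra fun hz => hs.2.2.2 z hz h, hs.2.1 z⟩

theorem not_syntacticCon_of_mem_separator {a b s : S} (ha : a ∈ A) (hb : b ∉ A)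
    (hs : s ∈ separator A) : ¬ syntacticCon A a b :=
  fun h => hs.2.2.2 _ (hs.2.2.1 b hb) ((h s s).mp (hs.2.1 _ (hs.1 a ha)))

end Semigroup

theorem syntacticCon_mul_separator {S : Type*} [CommSemigroup S] {A : Set S} {s : S}
    (hs : s ∈ separator A) (u : S) : syntacticCon A (u * s) u := fun x y => by
  rw [show x * (u * s) * y = x * u * y * s by rw [← mul_assoc, mul_right_comm]]
  exact mul_mem_iff_of_mem_separator_s18 hs _

theorem PA_monoid_congruence {S : Type*} [CommSemigroup S] (A : Set S)
    (hne : A.Nonempty) (hA : A ≠ Set.univ) (hsep : (separator A).Nonempty) :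
    ∃ c : Con S,
      (∀ a b : S, c a b ↔ ∀ x y : S, (x * a * y ∈ A ↔ x * b * y ∈ A)) ∧
      (¬ ∀ a b : S, c a b) ∧
      (∀ s ∈ separator A, ∀ u : S, c (u * s) u ∧ c (s * u) u) := by
  refine ⟨syntacticCon A, fun _ _ => syntacticCon_iff A, fun h => ?_, fun s hs u => ?_⟩
  · obtain ⟨a, ha⟩ := hne
    obtain ⟨b, hb⟩ := (Set.ne_univ_iff_exists_notMem A).mp hA
    obtain ⟨s, hs⟩ := hsep
    exact not_syntacticCon_of_mem_separator ha hb hs (h a b)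
  · exact ⟨syntacticCon_mul_separator hs u, mul_comm s u ▸ syntacticCon_mul_separator hs u⟩
end
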